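/- arXiv:1402.1220 — 2 statements merged into one kernel-verified Lean document; each statement's English description precedes it below -/
import Mathlib

section
/- Let b ∈ ℝ³ and fix α ∈ {1,2,3}. Then for every r ≥ 1, ∫_{B(r)\B(1)} x^α (cos(log|x|)/|x|⁵) (b·x) dv₀(x) = (4π b^α/3) sin(log r), where B(r) is the Euclidean ball of radius r centered at the origin and dv₀ is Lebesgue measure on ℝ³. In particular, this integral does not converge as r → ∞ when b^α ≠ 0. -/
open MeasureTheory Metric Filter Real
open scoped Topology

noncomputable section

/-- `ℝ³` with the Euclidean inner product and norm. -/
abbrev E3 : Type := EuclideanSpace ℝ (Fin 3)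

/-- The partial derivative `∂_i f (x)` of a function `f : ℝ³ → ℝ` in the `i`-th
coordinate direction. -/
def pd (i : Fin 3) (f : E3 → ℝ) (x : E3) : ℝ := fderiv ℝ f x (EuclideanSpace.single i 1)

/-- `ODecay k K φ` means `φ = O_k(r^{-K})`: all partial derivatives of order `i ≤ k`
are bounded by `C |x| ^ (-K - i)` for all sufficiently large `|x|`. -/
def ODecay (k K : ℕ) (φ : E3 → ℝ) : Prop :=
  ∃ C R : ℝ, ∀ x : E3, R ≤ ‖x‖ → ∀ i ≤ k, ‖iteratedFDeriv ℝ i φ x‖ ≤ C / ‖x‖ ^ (K + i)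

/-- The conformally flat Schwarzschild background metric
`ḡ_ij = (1 + m/(2r))⁴ δ_ij` of mass `m` (as a matrix-valued function on `ℝ³`). -/
def schwMetric (m : ℝ) (x : E3) : Matrix (Fin 3) (Fin 3) ℝ :=
  ((1 + m / (2 * ‖x‖)) ^ 4) • (1 : Matrix (Fin 3) (Fin 3) ℝ)

/-- A smooth metric `g` on `ℝ³` is asymptotically Schwarzschild (AS) of mass `m` if it is
smooth, positive definite, and `g_ij = (1 + m/(2r))⁴ δ_ij + p_ij` near infinity
with `p_ij = O₄(r^{-2})`. -/
def IsAS (m : ℝ) (g : E3 → Matrix (Fin 3) (Fin 3) ℝ) : Prop :=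
  (∀ i j, ContDiff ℝ (⊤ : ℕ∞) fun x => g x i j) ∧ (∀ x, (g x).PosDef) ∧
  ∃ p : E3 → Matrix (Fin 3) (Fin 3) ℝ, (∀ i j, ODecay 4 2 fun x => p x i j) ∧
    ∃ R : ℝ, ∀ x : E3, R ≤ ‖x‖ → g x = schwMetric m x + p x

/-- The Christoffel symbols `Γ^k_ij = ½ g^{kl}(∂_i g_{jl} + ∂_j g_{il} - ∂_l g_{ij})`. -/
def Chr (g : E3 → Matrix (Fin 3) (Fin 3) ℝ) (k i j : Fin 3) (x : E3) : ℝ :=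
  (1 / 2) * ∑ l, (g x)⁻¹ k l *
    (pd i (fun y => g y j l) x + pd j (fun y => g y i l) x - pd l (fun y => g y i j) x)

/-- The Ricci curvature
`Ric_ij = ∑_k (∂_k Γ^k_ij - ∂_j Γ^k_ik) + ∑_{k,l} (Γ^k_{kl}Γ^l_{ij} - Γ^k_{jl}Γ^l_{ik})`. -/
def RicT (g : E3 → Matrix (Fin 3) (Fin 3) ℝ) (i j : Fin 3) (x : E3) : ℝ :=
  (∑ k, (pd k (fun y => Chr g k i j y) x - pd j (fun y => Chr g k i k y) x)) +
  ∑ k, ∑ l, (Chr g k k l x * Chr g l i j x - Chr g k j l x * Chr g l i k x)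

/-- The scalar curvature `R_g = ∑_{i,j} g^{ij} Ric_ij`. -/
def scalCurv (g : E3 → Matrix (Fin 3) (Fin 3) ℝ) (x : E3) : ℝ :=
  ∑ i, ∑ j, (g x)⁻¹ i j * RicT g i j x

/-- The integral of `F` over the Euclidean sphere `{|x| = r}` with respect to the
Euclidean area element (the 2-dimensional Hausdorff measure). -/
def sphereIntegral (F : E3 → ℝ) (r : ℝ) : ℝ := ∫ x in sphere (0 : E3) r, F x ∂ μH[2]

/-- The integrand `x^α ∑_{i,j}(∂_i g_{ij} - ∂_j g_{ii}) x^j - ∑_i (h_{iα} x^i - h_{ii} x^α)`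
in the Corvino–Schoen center of mass, where `h = g - δ`. -/
def csIntegrand (g : E3 → Matrix (Fin 3) (Fin 3) ℝ) (α : Fin 3) (x : E3) : ℝ :=
  x α * ∑ i, ∑ j, (pd i (fun y => g y i j) x - pd j (fun y => g y i i) x) * x j
  - ∑ i, ((g x i α - if i = α then 1 else 0) * x i - (g x i i - 1) * x α)

/-- The Corvino–Schoen center of mass integral `c_CS^α(r)`. -/
def cCS (m : ℝ) (g : E3 → Matrix (Fin 3) (Fin 3) ℝ) (α : Fin 3) (r : ℝ) : ℝ :=
  (1 / (16 * π * m)) * sphereIntegral (fun x => csIntegrand g α x / r) r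

/-- The Euclidean Laplacian `Δu = ∑_i ∂_i ∂_i u`. -/
def lap (u : E3 → ℝ) (x : E3) : ℝ := ∑ i, pd i (fun y => pd i u y) x

/-- The Newtonian potential `v(x) = -(1/(4π)) ∫ f(y)/|x-y| dy`. -/
def nwt (f : E3 → ℝ) (x : E3) : ℝ := -(1 / (4 * π)) * ∫ y : E3, f y / ‖x - y‖

/-- The conformally flat metric `g_ij = u⁴ δ_ij`. -/
def gconf (u : E3 → ℝ) (x : E3) : Matrix (Fin 3) (Fin 3) ℝ :=
  (u x ^ 4) • (1 : Matrix (Fin 3) (Fin 3) ℝ)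

/-- The conformally flat metric `g_ij = (1 + m/(2|x|) + φ(|x|)(b·x)/|x|³)⁴ δ_ij`. -/
def gPhi (m : ℝ) (b : E3) (φ : ℝ → ℝ) (x : E3) : Matrix (Fin 3) (Fin 3) ℝ :=
  ((1 + m / (2 * ‖x‖) + φ ‖x‖ * (inner ℝ b x : ℝ) / ‖x‖ ^ 3) ^ 4) •
    (1 : Matrix (Fin 3) (Fin 3) ℝ)

/-- A metric defined near infinity is asymptotically Schwarzschild of mass `m` outside a
sufficiently large ball. -/
def IsASNearInfinity (m : ℝ) (g : E3 → Matrix (Fin 3) (Fin 3) ℝ) : Prop :=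
  ∃ R : ℝ, 0 < R ∧ (∀ i j, ContDiffOn ℝ (⊤ : ℕ∞) (fun x => g x i j) {x : E3 | R < ‖x‖}) ∧
    (∀ x : E3, R < ‖x‖ → (g x).PosDef) ∧
    ∃ p : E3 → Matrix (Fin 3) (Fin 3) ℝ, (∀ i j, ODecay 4 2 fun x => p x i j) ∧
      ∀ x : E3, R < ‖x‖ → g x = schwMetric m x + p x

/-!
On the annulus `1 < |x| ≤ r` the integrand is `x^α g(|x|) (b·x)` for a radial weight `g`.
Reflecting one coordinate shows that the mixed moments `∫ x^i x^j g(|x|)` vanish, and permuting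
coordinates shows that the three moments `∫ (x^i)² g(|x|)` agree, so the integral equals
`(b^α/3) ∫ |x|² g(|x|)`. In polar coordinates this is `(4π b^α/3) ∫₁^r cos(log t)/t dt`, i.e.
`(4π b^α/3) sin(log r)`, which keeps taking both values `±4π b^α/3` as `r → ∞`.
-/

section RadialMoments

variable {ι : Type*} [Fintype ι]

def coordReflection [DecidableEq ι] (i : ι) : EuclideanSpace ℝ ι ≃ₗᵢ[ℝ] EuclideanSpace ℝ ι :=
  LinearIsometryEquiv.piLpCongrRight 2 fun j =>
    if j = i then LinearIsometryEquiv.neg ℝ else LinearIsometryEquiv.refl ℝ ℝ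

@[simp]
lemma coordReflection_apply_self [DecidableEq ι] (i : ι) (x : EuclideanSpace ℝ ι) :
    coordReflection i x i = -x i := by
  simp [coordReflection]

lemma coordReflection_apply_of_ne [DecidableEq ι] {i j : ι} (h : j ≠ i)
    (x : EuclideanSpace ℝ ι) : coordReflection i x j = x j := by
  simp [coordReflection, h]

theorem integral_coord_mul_coord_mul_radial_of_ne (g : ℝ → ℝ) {i j : ι} (hij : i ≠ j) :
    ∫ x : EuclideanSpace ℝ ι, x i * x j * g ‖x‖ = 0 := by
  classical
  have h := MeasureTheory.integral_comp (coordReflection j) fun x => x i * x j * g ‖x‖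
  simp only [coordReflection_apply_self, coordReflection_apply_of_ne hij,
    LinearIsometryEquiv.norm_map, mul_neg, neg_mul, integral_neg] at h
  linarith

theorem integral_sq_coord_mul_radial_eq (g : ℝ → ℝ) (i j : ι) :
    ∫ x : EuclideanSpace ℝ ι, x i ^ 2 * g ‖x‖ = ∫ x : EuclideanSpace ℝ ι, x j ^ 2 * g ‖x‖ := by
  classical
  have h := MeasureTheory.integral_comp
    (LinearIsometryEquiv.piLpCongrLeft 2 ℝ ℝ (Equiv.swap i j)) fun x => x i ^ 2 * g ‖x‖
  simpa [LinearIsometryEquiv.piLpCongrLeft_apply, Equiv.piCongrLeft'_apply] using h.symm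

theorem integrable_coord_mul_coord_mul_radial {g : ℝ → ℝ} (hgm : Measurable g)
    (hg : Integrable fun x : EuclideanSpace ℝ ι => ‖x‖ ^ 2 * g ‖x‖) (i j : ι) :
    Integrable fun x : EuclideanSpace ℝ ι => x i * x j * g ‖x‖ := by
  refine hg.mono (by fun_prop) (Eventually.of_forall fun x => ?_)
  simp only [norm_mul, norm_pow, norm_norm]
  gcongr
  rw [sq]
  exact mul_le_mul (PiLp.norm_apply_le x i) (PiLp.norm_apply_le x j) (norm_nonneg _)
    (norm_nonneg _)

theorem integral_sq_coord_mul_radial {g : ℝ → ℝ} (hgm : Measurable g)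
    (hg : Integrable fun x : EuclideanSpace ℝ ι => ‖x‖ ^ 2 * g ‖x‖) (i : ι) :
    ∫ x : EuclideanSpace ℝ ι, x i ^ 2 * g ‖x‖ =
      (∫ x : EuclideanSpace ℝ ι, ‖x‖ ^ 2 * g ‖x‖) / Fintype.card ι := by
  have : Nonempty ι := ⟨i⟩
  have hcard : (Fintype.card ι : ℝ) ≠ 0 := by positivity
  simp_rw [EuclideanSpace.real_norm_sq_eq, Finset.sum_mul]
  rw [integral_finsetSum _ fun j _ => by
    simpa only [sq] using integrable_coord_mul_coord_mul_radial hgm hg j j]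
  simp_rw [integral_sq_coord_mul_radial_eq g _ i, Finset.sum_const, Finset.card_univ,
    nsmul_eq_mul]
  field_simp

theorem integral_coord_mul_radial_mul_inner {g : ℝ → ℝ} (hgm : Measurable g)
    (hg : Integrable fun x : EuclideanSpace ℝ ι => ‖x‖ ^ 2 * g ‖x‖) (b : EuclideanSpace ℝ ι)
    (i : ι) :
    ∫ x : EuclideanSpace ℝ ι, x i * g ‖x‖ * inner ℝ b x =
      b i * (∫ x : EuclideanSpace ℝ ι, ‖x‖ ^ 2 * g ‖x‖) / Fintype.card ι := by
  have expand : ∀ x : EuclideanSpace ℝ ι,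
      x i * g ‖x‖ * inner ℝ b x = ∑ j, b j * (x i * x j * g ‖x‖) := fun x => by
    simp only [PiLp.inner_apply, RCLike.inner_apply, conj_trivial, Finset.mul_sum]
    exact Finset.sum_congr rfl fun j _ => by ring
  simp_rw [expand]
  rw [integral_finsetSum _ fun j _ =>
    (integrable_coord_mul_coord_mul_radial hgm hg i j).const_mul _]
  simp_rw [integral_const_mul]
  rw [Finset.sum_eq_single i (fun j _ hji => by
      rw [integral_coord_mul_coord_mul_radial_of_ne g (Ne.symm hji), mul_zero]) (by simp)]
  simp_rw [← sq]
  rw [integral_sq_coord_mul_radial hgm hg, mul_div_assoc]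

end RadialMoments

theorem integral_fun_norm_fin_three (f : ℝ → ℝ) :
    ∫ x : E3, f ‖x‖ = 4 * π * ∫ t in Set.Ioi 0, t ^ 2 * f t := by
  rw [integral_fun_norm_addHaar volume f, measureReal_def, EuclideanSpace.volume_ball_fin_three]
  simp only [finrank_euclideanSpace_fin, smul_eq_mul, nsmul_eq_mul]
  rw [ENNReal.toReal_mul, ENNReal.toReal_ofReal (by positivity)]
  norm_num
  ring

theorem integrable_fun_norm_fin_three {f : ℝ → ℝ} :
    Integrable (fun x : E3 => f ‖x‖) ↔ IntegrableOn (fun t => t ^ 2 * f t) (Set.Ioi 0) := by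
  simpa using integrable_fun_norm_addHaar (E := E3) volume (f := f)

lemma continuousOn_cos_log_div : ContinuousOn (fun t => cos (log t) / t) {0}ᶜ := by
  fun_prop (disch := simp_all)

theorem integral_cos_log_div {a b : ℝ} (ha : 0 < a) (hb : 0 < b) :
    ∫ t in a..b, cos (log t) / t = sin (log b) - sin (log a) := by
  have hpos : Set.uIcc a b ⊆ {0}ᶜ := fun t ht => (lt_of_lt_of_le (lt_min ha hb) ht.1).ne'
  refine intervalIntegral.integral_eq_sub_of_hasDerivAt (f := fun t => sin (log t))
    (fun t ht => ?_) (continuousOn_cos_log_div.mono hpos).intervalIntegrable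
  simpa only [div_eq_mul_inv] using (hasDerivAt_log (hpos ht)).sin

def annulusWeight (r : ℝ) : ℝ → ℝ := (Set.Ioc 1 r).indicator fun t => cos (log t) / t ^ 5

lemma measurable_annulusWeight (r : ℝ) : Measurable (annulusWeight r) :=
  (by fun_prop : Measurable fun t : ℝ => cos (log t) / t ^ 5).indicator measurableSet_Ioc

lemma sq_mul_sq_mul_annulusWeight (r t : ℝ) :
    t ^ 2 * (t ^ 2 * annulusWeight r t) =
      (Set.Ioc 1 r).indicator (fun t => cos (log t) / t) t := by
  by_cases ht : t ∈ Set.Ioc 1 r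
  · have : t ≠ 0 := (lt_trans one_pos ht.1).ne'
    simp only [annulusWeight, Set.indicator_of_mem ht]
    field_simp
  · simp [annulusWeight, Set.indicator_of_notMem ht]

lemma integrable_norm_sq_mul_annulusWeight (r : ℝ) :
    Integrable fun x : E3 => ‖x‖ ^ 2 * annulusWeight r ‖x‖ := by
  rw [integrable_fun_norm_fin_three (f := fun t => t ^ 2 * annulusWeight r t)]
  simp_rw [sq_mul_sq_mul_annulusWeight]
  have hcont : ContinuousOn (fun t => cos (log t) / t) (Set.Icc 1 r) :=
    continuousOn_cos_log_div.mono fun t ht => (lt_of_lt_of_le one_pos ht.1).ne'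
  exact ((hcont.integrableOn_Icc.mono_set Set.Ioc_subset_Icc_self).integrable_indicator
    measurableSet_Ioc).integrableOn

lemma integral_norm_sq_mul_annulusWeight {r : ℝ} (hr : 1 ≤ r) :
    ∫ x : E3, ‖x‖ ^ 2 * annulusWeight r ‖x‖ = 4 * π * sin (log r) := by
  rw [integral_fun_norm_fin_three fun t => t ^ 2 * annulusWeight r t]
  simp_rw [sq_mul_sq_mul_annulusWeight]
  rw [setIntegral_indicator measurableSet_Ioc,
    Set.inter_eq_self_of_subset_right
      (Set.Ioc_subset_Ioi_self.trans (Set.Ioi_subset_Ioi zero_le_one)),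
    ← intervalIntegral.integral_of_le hr, integral_cos_log_div one_pos (one_pos.trans_le hr),
    log_one, sin_zero, sub_zero]

lemma closedBall_diff_closedBall_eq_preimage_norm {E : Type*} [SeminormedAddCommGroup E]
    (r R : ℝ) : closedBall (0 : E) R \ closedBall 0 r = norm ⁻¹' Set.Ioc r R := by
  ext x
  simp [and_comm]

theorem not_tendsto_const_mul_sin_log_atTop {c L : ℝ} (hc : c ≠ 0) :
    ¬ Tendsto (fun r => c * sin (log r)) atTop (𝓝 L) := by
  intro hL
  have limit_eq : ∀ θ : ℝ, L = c * sin θ := fun θ => by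
    have hθ : Tendsto (fun n : ℕ => exp (θ + n * (2 * π))) atTop atTop :=
      tendsto_exp_atTop.comp <| tendsto_atTop_add_const_left _ _ <|
        tendsto_natCast_atTop_atTop.atTop_mul_const (by positivity)
    refine tendsto_nhds_unique (hL.comp hθ) ?_
    simp only [Function.comp_def, log_exp, sin_add_nat_mul_two_pi]
    exact tendsto_const_nhds
  have := (limit_eq (π / 2)).symm.trans (limit_eq (-(π / 2)))
  rw [sin_neg, sin_pi_div_two] at this
  exact hc (by linarith)

/-- For every `b ∈ ℝ³`, `α ∈ {1,2,3}` and `r ≥ 1`,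
`∫_{B(r)\B(1)} x^α (cos(log|x|)/|x|⁵)(b·x) dv₀ = (4π b^α/3) sin(log r)`;
in particular the integral does not converge as `r → ∞` when `b^α ≠ 0`. -/
theorem stmt15 (b : E3) (α : Fin 3) :
    (∀ r : ℝ, 1 ≤ r →
      (∫ x in closedBall (0 : E3) r \ closedBall (0 : E3) 1,
          x α * (Real.cos (Real.log ‖x‖) / ‖x‖ ^ 5) * (inner ℝ b x : ℝ))
        = (4 * π * b α / 3) * Real.sin (Real.log r)) ∧
    (b α ≠ 0 → ¬ ∃ L : ℝ, Tendsto (fun r =>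
        ∫ x in closedBall (0 : E3) r \ closedBall (0 : E3) 1,
          x α * (Real.cos (Real.log ‖x‖) / ‖x‖ ^ 5) * (inner ℝ b x : ℝ)) atTop (𝓝 L)) := by
  have formula : ∀ r : ℝ, 1 ≤ r →
      (∫ x in closedBall (0 : E3) r \ closedBall (0 : E3) 1,
          x α * (cos (log ‖x‖) / ‖x‖ ^ 5) * (inner ℝ b x : ℝ))
        = (4 * π * b α / 3) * sin (log r) := by
    intro r hr
    calc _ = ∫ x : E3, x α * annulusWeight r ‖x‖ * inner ℝ b x := by
          rw [closedBall_diff_closedBall_eq_preimage_norm,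
            ← integral_indicator (measurableSet_Ioc.preimage measurable_norm)]
          congr with x
          by_cases hx : ‖x‖ ∈ Set.Ioc 1 r <;> simp [annulusWeight, hx]
      _ = b α * (4 * π * sin (log r)) / 3 := by
          rw [integral_coord_mul_radial_mul_inner (measurable_annulusWeight r)
            (integrable_norm_sq_mul_annulusWeight r), integral_norm_sq_mul_annulusWeight hr]
          simp
      _ = _ := by ring
  refine ⟨formula, fun hb ⟨L, hL⟩ => ?_⟩
  refine not_tendsto_const_mul_sin_log_atTop (c := 4 * π * b α / 3) (by positivity)
    (hL.congr' ?_)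
  filter_upwards [eventually_ge_atTop 1] with r hr using formula r hr
end
end

section
/- There exists a smooth function K ≥ 0 on ℝ³ such that: (i) |∂^{(i)}K(x)| ≤ C|x|^{−4−i} for 0 ≤ i ≤ 3 and all sufficiently large |x|; (ii) there is a constant C > 0 with |∫_{B(r)} x^α K(x) dv₀| ≤ C for α = 1, 2, 3 and all r > 0; and (iii) for some α ∈ {1, 2, 3}, the limit lim_{r→∞} ∫_{B(r)} x^α K(x) dv₀ does not exist. (For instance K(x) = φ(x)(b·x) + Aη(x), where φ is a smooth radial function equal to cos(log|x|)/|x|⁵ for |x| ≥ 1, η is a smooth positive radial function equal to |x|^{−4} for |x| ≥ 1, b ≠ 0, and A > 0 is large enough that K > 0.) -/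
/-!
Take `K(x) = x₀ φ(|x|) + η(|x|)` with `φ(t) = cos(log t) / t⁵` and `η(t) = t⁻⁴` for large `t`.
Near a point with `|x| = l`, `K(z) = l⁻⁴ P_θ(z / l)` with `θ = log l`, where `P_θ` is a
combination of three fixed smooth functions with coefficients `cos θ`, `sin θ`, `1`; so the
derivatives of `P_θ` on the unit sphere are bounded uniformly in `θ`, and rescaling gives the
decay `|x|^(-4-i)`. By reflection symmetry only the moment `α = 0` survives, and
`∫_{B(r)} x₀ K = |B(1)| ∫₀^r t⁴ φ(t) dt`, which for `r ≥ 2` is a constant plus `sin(log r)`: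
bounded, without a limit.
-/

open MeasureTheory Metric Filter Real
open scoped Topology

noncomputable section

open Set

section Cutoff

def cutoff (a t : ℝ) : ℝ := smoothTransition (t / a - 1)

variable {a t : ℝ}

lemma cutoff_of_le (ha : 0 < a) (h : t ≤ a) : cutoff a t = 0 :=
  smoothTransition.zero_of_nonpos (by rw [sub_nonpos, div_le_one ha]; exact h)

lemma cutoff_of_two_mul_le (ha : 0 < a) (h : 2 * a ≤ t) : cutoff a t = 1 :=
  smoothTransition.one_of_one_le (by rw [le_sub_iff_add_le, le_div_iff₀ ha]; linarith)

lemma cutoff_nonneg : 0 ≤ cutoff a t := smoothTransition.nonneg _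

lemma cutoff_le_one : cutoff a t ≤ 1 := smoothTransition.le_one _

lemma contDiff_cutoff {n : ℕ∞} : ContDiff ℝ n (cutoff a) :=
  smoothTransition.contDiff.comp ((contDiff_id.div_const a).sub contDiff_const)

/-- The cutoff vanishes for `t ≤ a`, so the junk values of `log t` and `1 / t ^ p` at `t ≤ 0`
never enter. -/
def cutoffProfile (a : ℝ) (c : ℝ → ℝ) (p : ℕ) (t : ℝ) : ℝ := cutoff a t * (c (log t) / t ^ p)

variable {c : ℝ → ℝ} {p : ℕ}

lemma cutoffProfile_of_le (ha : 0 < a) (h : t ≤ a) : cutoffProfile a c p t = 0 := by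
  rw [cutoffProfile, cutoff_of_le ha h, zero_mul]

lemma cutoffProfile_of_two_mul_le (ha : 0 < a) (h : 2 * a ≤ t) :
    cutoffProfile a c p t = c (log t) / t ^ p := by
  rw [cutoffProfile, cutoff_of_two_mul_le ha h, one_mul]

lemma contDiff_cutoffProfile {n : ℕ∞} (ha : 0 < a) (hc : ContDiff ℝ n c) :
    ContDiff ℝ n (cutoffProfile a c p) := by
  rw [contDiff_iff_contDiffAt]
  intro t
  rcases lt_or_ge 0 t with ht | ht
  · exact contDiff_cutoff.contDiffAt.mul <| (hc.contDiffAt.comp t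
      (contDiffAt_log.2 ht.ne')).div (contDiffAt_id.pow p) (pow_ne_zero p ht.ne')
  · refine (contDiffAt_const (c := 0)).congr_of_eventuallyEq ?_
    filter_upwards [Iio_mem_nhds (ht.trans_lt ha)] with s hs
    exact cutoffProfile_of_le ha hs.le

end Cutoff

section Radial

variable {E : Type*} [NormedAddCommGroup E] [InnerProductSpace ℝ E]

theorem contDiff_comp_norm {n : ℕ∞} {ρ : ℝ → ℝ} (hρ : ContDiff ℝ n ρ)
    (h0 : ∀ᶠ t in 𝓝 0, ρ t = ρ 0) : ContDiff ℝ n fun x : E => ρ ‖x‖ := by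
  rw [contDiff_iff_contDiffAt]
  intro x
  rcases eq_or_ne x 0 with rfl | hx
  · exact (contDiffAt_const (c := ρ 0)).congr_of_eventuallyEq
      ((continuous_norm.tendsto' (0 : E) 0 norm_zero).eventually h0)
  · exact hρ.contDiffAt.comp x (contDiffAt_norm ℝ hx)

theorem contDiff_cutoffProfile_comp_norm {n : ℕ∞} {a : ℝ} {c : ℝ → ℝ} {p : ℕ} (ha : 0 < a)
    (hc : ContDiff ℝ n c) : ContDiff ℝ n fun x : E => cutoffProfile a c p ‖x‖ := by
  refine contDiff_comp_norm (contDiff_cutoffProfile ha hc) ?_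
  filter_upwards [Iio_mem_nhds ha] with t ht
  rw [cutoffProfile_of_le ha ht.le, cutoffProfile_of_le ha ha.le]

end Radial

section Derivatives

variable {E F : Type*} [NormedAddCommGroup E] [NormedSpace ℝ E]
  [NormedAddCommGroup F] [NormedSpace ℝ F]

theorem exists_bound_iteratedFDeriv_of_isCompact {f : E → F} {k : ℕ} (hf : ContDiff ℝ k f)
    {s : Set E} (hs : IsCompact s) : ∃ M, ∀ y ∈ s, ∀ i ≤ k, ‖iteratedFDeriv ℝ i f y‖ ≤ M := by
  have hcont : Continuous fun y => ∑ i ∈ Finset.range (k + 1), ‖iteratedFDeriv ℝ i f y‖ :=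
    continuous_finsetSum _ fun i hi => (hf.continuous_iteratedFDeriv
      (by exact_mod_cast Nat.lt_succ_iff.1 (Finset.mem_range.1 hi))).norm
  obtain ⟨M, hM⟩ := hs.exists_bound_of_continuousOn hcont.continuousOn
  refine ⟨M, fun y hy i hi => le_trans ?_ ((le_abs_self _).trans (hM y hy))⟩
  exact Finset.single_le_sum (f := fun i => ‖iteratedFDeriv ℝ i f y‖)
    (fun j _ => norm_nonneg _) (Finset.mem_range.2 (by omega))

theorem exists_bound_iteratedFDeriv_mul_add_mul_add {f g h : E → ℝ} {k : ℕ}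
    (hf : ContDiff ℝ k f) (hg : ContDiff ℝ k g) (hh : ContDiff ℝ k h) {s : Set E}
    (hs : IsCompact s) : ∃ M, ∀ a b : ℝ, |a| ≤ 1 → |b| ≤ 1 → ∀ y ∈ s, ∀ i ≤ k,
      ‖iteratedFDeriv ℝ i (fun y => a * f y + b * g y + h y) y‖ ≤ M := by
  obtain ⟨Mf, hMf⟩ := exists_bound_iteratedFDeriv_of_isCompact hf hs
  obtain ⟨Mg, hMg⟩ := exists_bound_iteratedFDeriv_of_isCompact hg hs
  obtain ⟨Mh, hMh⟩ := exists_bound_iteratedFDeriv_of_isCompact hh hs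
  refine ⟨Mf + Mg + Mh, fun a b ha hb y hy i hi => ?_⟩
  have hi' : (i : WithTop ℕ∞) ≤ k := by exact_mod_cast hi
  have hfi := (hf.of_le hi').contDiffAt (x := y)
  have hgi := (hg.of_le hi').contDiffAt (x := y)
  have hhi := (hh.of_le hi').contDiffAt (x := y)
  have hD : iteratedFDeriv ℝ i (fun y => a * f y + b * g y + h y) y =
      a • iteratedFDeriv ℝ i f y + b • iteratedFDeriv ℝ i g y + iteratedFDeriv ℝ i h y := by
    simp only [← smul_eq_mul (a := a), ← smul_eq_mul (a := b)]
    rw [fun_iteratedFDeriv_add_apply ((hfi.const_smul a).add (hgi.const_smul b)) hhi,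
      fun_iteratedFDeriv_add_apply (hfi.const_smul a) (hgi.const_smul b),
      iteratedFDeriv_const_smul_apply' hfi, iteratedFDeriv_const_smul_apply' hgi]
  rw [hD]
  refine (norm_add₃_le).trans ?_
  rw [norm_smul, norm_smul, Real.norm_eq_abs, Real.norm_eq_abs]
  gcongr
  · exact (mul_le_of_le_one_left (norm_nonneg _) ha).trans (hMf y hy i hi)
  · exact (mul_le_of_le_one_left (norm_nonneg _) hb).trans (hMg y hy i hi)
  · exact hMh y hy i hi

theorem norm_iteratedFDeriv_le_of_eventuallyEq_rescale {f g : E → F} {d i : ℕ} {M : ℝ} {x : E}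
    (hx : x ≠ 0) (hg : ContDiff ℝ i g) (hM : ‖iteratedFDeriv ℝ i g (‖x‖⁻¹ • x)‖ ≤ M)
    (hf : f =ᶠ[𝓝 x] fun z => (‖x‖ ^ d)⁻¹ • g (‖x‖⁻¹ • z)) :
    ‖iteratedFDeriv ℝ i f x‖ ≤ M / ‖x‖ ^ (d + i) := by
  have hx0 : 0 < ‖x‖ := norm_pos_iff.2 hx
  have hgx : ContDiffAt ℝ i (fun z => g (‖x‖⁻¹ • z)) x :=
    (hg.comp (contDiff_const_smul _)).contDiffAt
  rw [(hf.iteratedFDeriv ℝ i).eq_of_nhds, iteratedFDeriv_const_smul_apply' hgx,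
    iteratedFDeriv_comp_const_smul _ hg, norm_smul, norm_smul, norm_inv, norm_pow, norm_pow,
    norm_inv, norm_norm, pow_add, div_eq_mul_inv, mul_inv, inv_pow]
  calc _ ≤ (‖x‖ ^ d)⁻¹ * ((‖x‖ ^ i)⁻¹ * M) := by gcongr
    _ = _ := by ring

end Derivatives

section BallIntegrals

variable {E : Type*} [NormedAddCommGroup E] [InnerProductSpace ℝ E] [FiniteDimensional ℝ E]
  [MeasurableSpace E] [BorelSpace E]

theorem integrableOn_ball_of_continuous {f : E → ℝ} (hf : Continuous f) (r : ℝ) :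
    IntegrableOn f (ball 0 r) :=
  (hf.continuousOn.integrableOn_compact (isCompact_closedBall 0 r)).mono_set
    ball_subset_closedBall

theorem setIntegral_ball_comp_linearIsometryEquiv (e : E ≃ₗᵢ[ℝ] E) (f : E → ℝ) (r : ℝ) :
    ∫ x in ball (0 : E) r, f (e x) = ∫ x in ball (0 : E) r, f x := by
  have himage : e '' ball 0 r = ball 0 r := by simp
  conv_rhs => rw [← himage]
  rw [e.measurePreserving.setIntegral_image_emb e.toHomeomorph.measurableEmbedding]

theorem setIntegral_ball_eq_zero_of_odd (e : E ≃ₗᵢ[ℝ] E) {f : E → ℝ}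
    (hf : ∀ x, f (e x) = -f x) (r : ℝ) : ∫ x in ball (0 : E) r, f x = 0 := by
  have h := setIntegral_ball_comp_linearIsometryEquiv e f r
  simp only [hf, integral_neg] at h
  linarith

theorem setIntegral_ball_fun_norm [Nontrivial E] (Φ : ℝ → ℝ) {r : ℝ} (hr : 0 < r) :
    ∫ x in ball (0 : E) r, Φ ‖x‖ = Module.finrank ℝ E * volume.real (ball (0 : E) 1) *
      ∫ t in 0..r, t ^ (Module.finrank ℝ E - 1) * Φ t := by
  have hball : ∫ x in ball (0 : E) r, Φ ‖x‖ = ∫ x : E, (Iio r).indicator Φ ‖x‖ := by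
    rw [← integral_indicator measurableSet_ball]
    congr 1 with x
    by_cases h : ‖x‖ < r <;> simp [indicator, h]
  have hradial : ∫ t in Ioi (0 : ℝ), t ^ (Module.finrank ℝ E - 1) • (Iio r).indicator Φ t =
      ∫ t in 0..r, t ^ (Module.finrank ℝ E - 1) * Φ t := by
    have h : ∀ t : ℝ, t ^ (Module.finrank ℝ E - 1) • (Iio r).indicator Φ t =
        (Iio r).indicator (fun t => t ^ (Module.finrank ℝ E - 1) * Φ t) t := by
      intro t
      by_cases ht : t < r <;> simp [indicator, ht]
    simp only [h]
    rw [integral_indicator measurableSet_Iio, Measure.restrict_restrict measurableSet_Iio,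
      Iio_inter_Ioi, intervalIntegral.integral_of_le hr.le, integral_Ioc_eq_integral_Ioo]
  rw [hball, integral_fun_norm_addHaar, hradial, nsmul_eq_mul, smul_eq_mul, mul_assoc]

end BallIntegrals

section Coordinates

variable {ι : Type*} [Fintype ι] [DecidableEq ι]

def reflectCoord (i : ι) : EuclideanSpace ℝ ι ≃ₗᵢ[ℝ] EuclideanSpace ℝ ι :=
  LinearIsometryEquiv.piLpCongrRight 2
    fun j => if j = i then LinearIsometryEquiv.neg ℝ else LinearIsometryEquiv.refl ℝ ℝ

@[simp]
lemma reflectCoord_apply_self (i : ι) (x : EuclideanSpace ℝ ι) : reflectCoord i x i = -x i := by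
  simp [reflectCoord]

@[simp]
lemma reflectCoord_apply_of_ne {i j : ι} (h : j ≠ i) (x : EuclideanSpace ℝ ι) :
    reflectCoord i x j = x j := by
  simp [reflectCoord, h]

theorem card_mul_setIntegral_ball_sq_mul_fun_norm {Φ : ℝ → ℝ} (hΦ : Continuous Φ) (i : ι)
    (r : ℝ) : Fintype.card ι * ∫ x in ball (0 : EuclideanSpace ℝ ι) r, x i ^ 2 * Φ ‖x‖ =
      ∫ x in ball (0 : EuclideanSpace ℝ ι) r, ‖x‖ ^ 2 * Φ ‖x‖ := by
  have hint : ∀ j : ι, IntegrableOn (fun x : EuclideanSpace ℝ ι => x j ^ 2 * Φ ‖x‖)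
      (ball 0 r) := fun j => integrableOn_ball_of_continuous
    (((EuclideanSpace.proj j).continuous.pow 2).mul (hΦ.comp continuous_norm)) r
  have hswap : ∀ j : ι, ∫ x in ball (0 : EuclideanSpace ℝ ι) r, x j ^ 2 * Φ ‖x‖ =
      ∫ x in ball (0 : EuclideanSpace ℝ ι) r, x i ^ 2 * Φ ‖x‖ := by
    intro j
    rw [← setIntegral_ball_comp_linearIsometryEquiv
      (LinearIsometryEquiv.piLpCongrLeft 2 ℝ ℝ (Equiv.swap i j))]
    congr 1 with x
    simp [LinearIsometryEquiv.piLpCongrLeft_apply, Equiv.piCongrLeft'_apply]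
  have hnorm : ∀ x : EuclideanSpace ℝ ι, ‖x‖ ^ 2 * Φ ‖x‖ = ∑ j, x j ^ 2 * Φ ‖x‖ := by
    intro x
    simp [EuclideanSpace.norm_sq_eq, Finset.sum_mul]
  simp only [hnorm]
  rw [integral_finsetSum _ fun j _ => hint j]
  simp [hswap]

end Coordinates

theorem not_tendsto_sin_atTop (L : ℝ) : ¬Tendsto sin atTop (𝓝 L) := by
  intro h
  have hshift : ∀ c : ℝ, Tendsto (fun s => sin (s + c)) atTop (𝓝 L) := fun c =>
    h.comp (tendsto_atTop_add_const_right _ c tendsto_id)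
  have hneg : L = -L := tendsto_nhds_unique (hshift π) (by simpa [sin_add_pi] using h.neg)
  have hcos : Tendsto cos atTop (𝓝 L) := by simpa [sin_add_pi_div_two] using hshift (π / 2)
  have hone : L ^ 2 + L ^ 2 = 1 :=
    tendsto_nhds_unique ((h.pow 2).add (hcos.pow 2)) (by simp [sin_sq_add_cos_sq])
  nlinarith

theorem not_tendsto_sin_log (L : ℝ) : ¬Tendsto (fun r => sin (log r)) atTop (𝓝 L) := fun h =>
  not_tendsto_sin_atTop L ((h.comp tendsto_exp_atTop).congr fun s => by simp)

namespace OscillatingKernel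

def φ : ℝ → ℝ := cutoffProfile 1 cos 5

def η (t : ℝ) : ℝ := (1 + cutoff (1 / 2) t * (t ^ 4 - 1))⁻¹

/-- The paper's `φ(x)(b·x) + A η(x)` with `b = e₀` and `A = 1`: `φ` is switched on only where
`η = |x|⁻⁴ ≥ |x| |φ|`, so no larger `A` is needed. -/
def K (x : E3) : ℝ := x 0 * φ ‖x‖ + η ‖x‖

variable {t : ℝ}

lemma φ_of_le_one (h : t ≤ 1) : φ t = 0 := cutoffProfile_of_le one_pos h

lemma φ_of_two_le (h : 2 ≤ t) : φ t = cos (log t) / t ^ 5 :=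
  cutoffProfile_of_two_mul_le one_pos (by linarith)

lemma abs_φ_le (ht : 0 < t) : |φ t| ≤ 1 / t ^ 5 := by
  rw [φ, cutoffProfile, abs_mul, abs_div, abs_of_nonneg cutoff_nonneg,
    abs_of_pos (by positivity : 0 < t ^ 5)]
  calc cutoff 1 t * (|cos (log t)| / t ^ 5) ≤ 1 * (1 / t ^ 5) := by
        gcongr
        exacts [cutoff_le_one, abs_cos_le_one _]
    _ = 1 / t ^ 5 := one_mul _

lemma continuous_φ : Continuous φ :=
  (contDiff_cutoffProfile (n := 0) one_pos contDiff_cos).continuous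

lemma one_add_cutoff_mul_pos (t : ℝ) : 0 < 1 + cutoff (1 / 2) t * (t ^ 4 - 1) := by
  rcases le_or_gt t (1 / 2) with ht | ht
  · rw [cutoff_of_le (by norm_num) ht]
    norm_num
  · have h0 : 0 ≤ cutoff (1 / 2) t := cutoff_nonneg
    have h1 : cutoff (1 / 2) t ≤ 1 := cutoff_le_one
    have ht4 : (1 / 2) ^ 4 < t ^ 4 := by gcongr
    nlinarith [mul_le_mul_of_nonneg_left ht4.le h0]

lemma η_pos (t : ℝ) : 0 < η t := inv_pos.2 (one_add_cutoff_mul_pos t)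

lemma η_of_one_le (h : 1 ≤ t) : η t = 1 / t ^ 4 := by
  rw [η, cutoff_of_two_mul_le (by norm_num) (by linarith)]
  ring

lemma contDiff_η {n : ℕ∞} : ContDiff ℝ n η :=
  (contDiff_const.add (contDiff_cutoff.mul ((contDiff_id.pow 4).sub contDiff_const))).inv
    fun t => (one_add_cutoff_mul_pos t).ne'

lemma continuous_η : Continuous η := contDiff_η (n := 0).continuous

lemma contDiff_coord_mul_cutoffProfile {n : ℕ∞} {a : ℝ} {c : ℝ → ℝ} {p : ℕ} (ha : 0 < a)
    (hc : ContDiff ℝ n c) (i : Fin 3) :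
    ContDiff ℝ n fun y : E3 => y i * cutoffProfile a c p ‖y‖ :=
  (EuclideanSpace.proj i).contDiff.mul (contDiff_cutoffProfile_comp_norm ha hc)

lemma contDiff_K : ContDiff ℝ (⊤ : ℕ∞) K := by
  refine (contDiff_coord_mul_cutoffProfile one_pos contDiff_cos 0).add
    (contDiff_comp_norm contDiff_η ?_)
  filter_upwards [Iio_mem_nhds (by norm_num : (0 : ℝ) < 1 / 2)] with t ht
  rw [η, η, cutoff_of_le (by norm_num) ht.le, cutoff_of_le (by norm_num) (by norm_num)]
  simp

lemma K_nonneg (x : E3) : 0 ≤ K x := by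
  rcases le_or_gt ‖x‖ 1 with h | h
  · rw [K, φ_of_le_one h, mul_zero, zero_add]
    exact (η_pos _).le
  · have hx0 : 0 < ‖x‖ := by linarith
    have hφ : |x 0 * φ ‖x‖| ≤ η ‖x‖ := by
      rw [abs_mul, η_of_one_le h.le]
      calc |x 0| * |φ ‖x‖| ≤ ‖x‖ * (1 / ‖x‖ ^ 5) := by
            gcongr
            exacts [PiLp.norm_apply_le x 0, abs_φ_le hx0]
        _ = 1 / ‖x‖ ^ 4 := by field_simp
    rw [K]
    linarith [neg_abs_le (x 0 * φ ‖x‖)]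

lemma K_of_two_le {x : E3} (h : 2 ≤ ‖x‖) :
    K x = x 0 * (cos (log ‖x‖) / ‖x‖ ^ 5) + 1 / ‖x‖ ^ 4 := by
  rw [K, φ_of_two_le h, η_of_one_le (by linarith)]

/-- `l⁴ K(l y)` for `θ = log l` and `|y| ≥ 1/2`, written with coefficients `cos θ`, `sin θ` so
that derivative bounds on the unit sphere are uniform in `l`. -/
def model (θ : ℝ) (y : E3) : ℝ :=
  cos θ * (y 0 * cutoffProfile (1 / 4) cos 5 ‖y‖) +
    sin θ * (y 0 * cutoffProfile (1 / 4) (-sin) 5 ‖y‖) + cutoffProfile (1 / 4) 1 4 ‖y‖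

lemma contDiff_model {n : ℕ∞} (θ : ℝ) : ContDiff ℝ n (model θ) :=
  ((contDiff_const.mul (contDiff_coord_mul_cutoffProfile (by norm_num) contDiff_cos 0)).add
    (contDiff_const.mul (contDiff_coord_mul_cutoffProfile (by norm_num) contDiff_sin.neg 0))).add
    (contDiff_cutoffProfile_comp_norm (by norm_num) contDiff_const)

lemma model_of_half_le (θ : ℝ) {y : E3} (h : 1 / 2 ≤ ‖y‖) :
    model θ y = y 0 * (cos (log ‖y‖ + θ) / ‖y‖ ^ 5) + 1 / ‖y‖ ^ 4 := by
  have h' : 2 * (1 / 4 : ℝ) ≤ ‖y‖ := by linarith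
  simp only [model, cutoffProfile_of_two_mul_le (by norm_num : (0 : ℝ) < 1 / 4) h',
    Pi.neg_apply, Pi.one_apply, cos_add]
  ring

lemma K_eq_model {l : ℝ} (hl : 4 ≤ l) {z : E3} (hz : l / 2 ≤ ‖z‖) :
    K z = (l ^ 4)⁻¹ * model (log l) (l⁻¹ • z) := by
  have hl0 : 0 < l := by linarith
  have hz0 : 0 < ‖z‖ := by linarith
  have hnorm : ‖l⁻¹ • z‖ = ‖z‖ / l := by
    rw [norm_smul, norm_inv, Real.norm_of_nonneg hl0.le, inv_mul_eq_div]
  have hlog : log ‖l⁻¹ • z‖ + log l = log ‖z‖ := by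
    rw [hnorm, log_div hz0.ne' hl0.ne', sub_add_cancel]
  rw [K_of_two_le (by linarith), model_of_half_le _ (by rw [hnorm, le_div_iff₀ hl0]; linarith),
    hlog, hnorm, PiLp.smul_apply, smul_eq_mul]
  field_simp

lemma K_eventuallyEq_model {x : E3} (hx : 4 ≤ ‖x‖) :
    K =ᶠ[𝓝 x] fun z => (‖x‖ ^ 4)⁻¹ • model (log ‖x‖) (‖x‖⁻¹ • z) := by
  filter_upwards [continuous_norm.continuousAt.eventually_const_lt
    (by linarith : ‖x‖ / 2 < ‖x‖)] with z hz
  exact K_eq_model hx hz.le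

theorem norm_iteratedFDeriv_K_le : ∃ C R : ℝ, ∀ x : E3, R ≤ ‖x‖ →
    ∀ i ≤ 3, ‖iteratedFDeriv ℝ i K x‖ ≤ C / ‖x‖ ^ (4 + i) := by
  obtain ⟨M, hM⟩ := exists_bound_iteratedFDeriv_mul_add_mul_add (k := 3)
    (contDiff_coord_mul_cutoffProfile (p := 5) (by norm_num : (0 : ℝ) < 1 / 4) contDiff_cos 0)
    (contDiff_coord_mul_cutoffProfile (p := 5) (by norm_num : (0 : ℝ) < 1 / 4) contDiff_sin.neg 0)
    (contDiff_cutoffProfile_comp_norm (p := 4) (by norm_num : (0 : ℝ) < 1 / 4) contDiff_const)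
    (isCompact_sphere (0 : E3) 1)
  refine ⟨M, 4, fun x hx i hi => ?_⟩
  have hx0 : x ≠ 0 := norm_pos_iff.1 (by linarith)
  refine norm_iteratedFDeriv_le_of_eventuallyEq_rescale hx0 (contDiff_model _) ?_
    (K_eventuallyEq_model hx)
  exact hM _ _ (abs_cos_le_one _) (abs_sin_le_one _) _
    (mem_sphere_zero_iff_norm.2 (norm_smul_inv_norm hx0)) i hi

lemma setIntegral_ball_coord_mul_K_of_ne {α : Fin 3} (hα : α ≠ 0) (r : ℝ) :
    ∫ x in ball (0 : E3) r, x α * K x = 0 :=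
  setIntegral_ball_eq_zero_of_odd (reflectCoord α)
    (fun x => by simp [K, reflectCoord_apply_of_ne hα.symm]) r

lemma setIntegral_ball_coord_zero_mul_K {r : ℝ} (hr : 0 < r) :
    ∫ x in ball (0 : E3) r, x 0 * K x =
      volume.real (ball (0 : E3) 1) * ∫ t in 0..r, t ^ 4 * φ t := by
  have hint₁ : IntegrableOn (fun x : E3 => x 0 ^ 2 * φ ‖x‖) (ball 0 r) :=
    integrableOn_ball_of_continuous
      (((EuclideanSpace.proj 0).continuous.pow 2).mul (continuous_φ.comp continuous_norm)) r
  have hint₂ : IntegrableOn (fun x : E3 => x 0 * η ‖x‖) (ball 0 r) :=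
    integrableOn_ball_of_continuous
      ((EuclideanSpace.proj 0).continuous.mul (continuous_η.comp continuous_norm)) r
  have hodd : ∫ x in ball (0 : E3) r, x 0 * η ‖x‖ = 0 :=
    setIntegral_ball_eq_zero_of_odd (reflectCoord 0) (fun x => by simp) r
  have hsq := card_mul_setIntegral_ball_sq_mul_fun_norm continuous_φ (0 : Fin 3) r
  rw [setIntegral_ball_fun_norm (fun t => t ^ 2 * φ t) hr, finrank_euclideanSpace_fin] at hsq
  have hpow : ∀ t : ℝ, t ^ (3 - 1) * (t ^ 2 * φ t) = t ^ 4 * φ t := fun t => by ring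
  simp only [hpow, Fintype.card_fin] at hsq
  calc ∫ x in ball (0 : E3) r, x 0 * K x
      = ∫ x in ball (0 : E3) r, (x 0 ^ 2 * φ ‖x‖ + x 0 * η ‖x‖) := by
        congr 1 with x
        rw [K]
        ring
    _ = ∫ x in ball (0 : E3) r, x 0 ^ 2 * φ ‖x‖ := by
        rw [integral_add hint₁ hint₂, hodd, add_zero]
    _ = _ := by push_cast at hsq; linarith

lemma continuous_pow_four_mul_φ : Continuous fun t => t ^ 4 * φ t :=
  (continuous_pow 4).mul continuous_φ

lemma integral_pow_four_mul_φ_of_two_le {r : ℝ} (hr : 2 ≤ r) :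
    ∫ t in 0..r, t ^ 4 * φ t = (∫ t in 0..2, t ^ 4 * φ t) + (sin (log r) - sin (log 2)) := by
  rw [← intervalIntegral.integral_add_adjacent_intervals (b := 2)
    (continuous_pow_four_mul_φ.intervalIntegrable _ _)
    (continuous_pow_four_mul_φ.intervalIntegrable _ _)]
  congr 1
  refine intervalIntegral.integral_eq_sub_of_hasDerivAt (f := fun t => sin (log t))
    (fun t ht => ?_) (continuous_pow_four_mul_φ.intervalIntegrable _ _)
  rw [uIcc_of_le hr] at ht
  have ht0 : 0 < t := by linarith [ht.1]
  refine (hasDerivAt_log ht0.ne').sin.congr_deriv ?_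
  rw [φ_of_two_le ht.1]
  field_simp

lemma exists_bound_integral_pow_four_mul_φ :
    ∃ B, ∀ r, 0 < r → |∫ t in 0..r, t ^ 4 * φ t| ≤ B := by
  have hW : Continuous fun r => ∫ t in 0..r, t ^ 4 * φ t :=
    intervalIntegral.continuous_primitive
      (fun _ _ => continuous_pow_four_mul_φ.intervalIntegrable _ _) 0
  obtain ⟨D, hD⟩ := (isCompact_Icc (a := 0) (b := 2)).exists_bound_of_continuousOn hW.continuousOn
  simp only [Real.norm_eq_abs] at hD
  refine ⟨D + 2, fun r hr => ?_⟩
  rcases le_or_gt r 2 with h | h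
  · linarith [hD r ⟨hr.le, h⟩]
  · rw [integral_pow_four_mul_φ_of_two_le h.le]
    calc _ ≤ |∫ t in 0..2, t ^ 4 * φ t| + |sin (log r) - sin (log 2)| := abs_add_le _ _
      _ ≤ |∫ t in 0..2, t ^ 4 * φ t| + (|sin (log r)| + |sin (log 2)|) := by
          gcongr
          exact abs_sub _ _
      _ ≤ D + (1 + 1) := by
          gcongr
          exacts [hD 2 ⟨zero_le_two, le_rfl⟩, abs_sin_le_one _, abs_sin_le_one _]
      _ = D + 2 := by norm_num

theorem exists_bound_setIntegral_ball_coord_mul_K : ∃ C : ℝ, 0 < C ∧ ∀ r : ℝ, 0 < r →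
    ∀ α : Fin 3, |∫ x in ball (0 : E3) r, x α * K x| ≤ C := by
  obtain ⟨B, hB⟩ := exists_bound_integral_pow_four_mul_φ
  have hV : 0 ≤ volume.real (ball (0 : E3) 1) := measureReal_nonneg
  refine ⟨volume.real (ball (0 : E3) 1) * |B| + 1, by positivity, fun r hr α => ?_⟩
  rcases eq_or_ne α 0 with rfl | hα
  · rw [setIntegral_ball_coord_zero_mul_K hr, abs_mul, abs_of_nonneg hV]
    nlinarith [hB r hr, le_abs_self B]
  · rw [setIntegral_ball_coord_mul_K_of_ne hα, abs_zero]
    positivity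

theorem not_tendsto_setIntegral_ball_coord_zero_mul_K (L : ℝ) :
    ¬Tendsto (fun r => ∫ x in ball (0 : E3) r, x 0 * K x) atTop (𝓝 L) := by
  intro h
  set V := volume.real (ball (0 : E3) 1)
  have hV : 0 < V := ENNReal.toReal_pos (measure_ball_pos volume 0 one_pos).ne'
    measure_ball_lt_top.ne
  set c := (∫ t in 0..2, t ^ 4 * φ t) - sin (log 2)
  refine not_tendsto_sin_log (L / V - c) (((h.div_const V).sub_const c).congr' ?_)
  filter_upwards [eventually_ge_atTop 2] with r hr
  rw [setIntegral_ball_coord_zero_mul_K (by linarith), integral_pow_four_mul_φ_of_two_le hr]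
  field_simp
  ring

end OscillatingKernel

/-- Example of the paper. There is a smooth `K ≥ 0` on `ℝ³` with
`|∂^{(i)}K(x)| ≤ C|x|^{-4-i}` for `0 ≤ i ≤ 3` and large `|x|`, with
`|∫_{B(r)} x^α K dv₀| ≤ C` for all `r > 0` and `α = 1,2,3`, and such that for some `α` the
limit `lim_{r→∞} ∫_{B(r)} x^α K dv₀` does not exist. -/
theorem stmt16 :
    ∃ K : E3 → ℝ, ContDiff ℝ (⊤ : ℕ∞) K ∧ (∀ x, 0 ≤ K x) ∧
      (∃ C R : ℝ, ∀ x : E3, R ≤ ‖x‖ →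
        ∀ i ≤ 3, ‖iteratedFDeriv ℝ i K x‖ ≤ C / ‖x‖ ^ (4 + i)) ∧
      (∃ C : ℝ, 0 < C ∧ ∀ r : ℝ, 0 < r → ∀ α : Fin 3,
        |∫ x in ball (0 : E3) r, x α * K x| ≤ C) ∧
      (∃ α : Fin 3, ¬ ∃ L : ℝ,
        Tendsto (fun r => ∫ x in ball (0 : E3) r, x α * K x) atTop (𝓝 L)) :=
  ⟨OscillatingKernel.K, OscillatingKernel.contDiff_K, OscillatingKernel.K_nonneg,
    OscillatingKernel.norm_iteratedFDeriv_K_le,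
    OscillatingKernel.exists_bound_setIntegral_ball_coord_mul_K,
    0, fun ⟨L, hL⟩ => OscillatingKernel.not_tendsto_setIntegral_ball_coord_zero_mul_K L hL⟩
end
end
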